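/- Let (a_n) be a sequence of positive reals and C > 0 a constant such that for every n ≥ 2 one has a_n ≤ C · Σ_{n₁+n₂=n, n₁,n₂≥1} a_{n₁} a_{n₂}. Then for every n ≥ 1, a_n ≤ ((2/3)·π²·C)^{n-1} · a₁^n. -/

import Mathlib

/-!
Induction on the stronger bound `a n ≤ K ^ (n - 1) * a 1 ^ n / n ^ 2` with `K = (2/3) π² C`.
The factor `1 / n²` is what closes the induction: by `(k + l)² ≤ 2 (k² + l²)`,
`1 / (k² l²) ≤ (2 / n²) (1 / k² + 1 / l²)` whenever `k + l = n`, so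
`∑_{k + l = n} 1 / (k² l²) ≤ (2 / n²) · 2 ζ(2) = (2/3) π² / n²`.
-/

open Finset Real

theorem Finset.sum_Ioo_zero_reflect {M : Type*} [AddCommMonoid M] (f : ℕ → M) (n : ℕ) :
    ∑ k ∈ Ioo 0 n, f (n - k) = ∑ k ∈ Ioo 0 n, f k := by
  refine sum_nbij' (fun k => n - k) (fun k => n - k) ?_ ?_ ?_ ?_ ?_ <;>
    simp only [mem_Ioo] <;> intros <;> first | omega | trivial

theorem sum_Ioo_one_div_sq_le (n : ℕ) : ∑ k ∈ Ioo 0 n, 1 / (k : ℝ) ^ 2 ≤ π ^ 2 / 6 :=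
  sum_le_hasSum _ (fun _ _ => by positivity) hasSum_zeta_two

theorem one_div_sq_mul_sq_le {x y : ℝ} (hx : 0 < x) (hy : 0 < y) :
    1 / (x ^ 2 * y ^ 2) ≤ 2 / (x + y) ^ 2 * (1 / x ^ 2 + 1 / y ^ 2) := by
  rw [div_add_div _ _ (by positivity) (by positivity), div_mul_div_comm,
    div_le_div_iff₀ (by positivity) (by positivity)]
  nlinarith [mul_nonneg (sq_nonneg (x - y)) (by positivity : (0 : ℝ) ≤ x ^ 2 * y ^ 2)]

theorem sum_Ioo_one_div_sq_mul_sq_le (n : ℕ) :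
    ∑ k ∈ Ioo 0 n, 1 / ((k : ℝ) ^ 2 * ((n - k : ℕ) : ℝ) ^ 2) ≤ 2 / 3 * π ^ 2 / (n : ℝ) ^ 2 := by
  have hterm : ∀ k ∈ Ioo 0 n, 1 / ((k : ℝ) ^ 2 * ((n - k : ℕ) : ℝ) ^ 2)
      ≤ 2 / (n : ℝ) ^ 2 * (1 / (k : ℝ) ^ 2 + 1 / ((n - k : ℕ) : ℝ) ^ 2) := by
    intro k hk
    obtain ⟨hk0, hkn⟩ := mem_Ioo.mp hk
    have hsum : (n : ℝ) = k + (n - k : ℕ) := by exact_mod_cast (Nat.add_sub_of_le hkn.le).symm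
    rw [hsum]
    exact one_div_sq_mul_sq_le (by exact_mod_cast hk0) (by exact_mod_cast Nat.sub_pos_of_lt hkn)
  calc ∑ k ∈ Ioo 0 n, 1 / ((k : ℝ) ^ 2 * ((n - k : ℕ) : ℝ) ^ 2)
      ≤ ∑ k ∈ Ioo 0 n, 2 / (n : ℝ) ^ 2 * (1 / (k : ℝ) ^ 2 + 1 / ((n - k : ℕ) : ℝ) ^ 2) :=
        sum_le_sum hterm
    _ = 2 / (n : ℝ) ^ 2 * (2 * ∑ k ∈ Ioo 0 n, 1 / (k : ℝ) ^ 2) := by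
        rw [← mul_sum, sum_add_distrib, sum_Ioo_zero_reflect (fun k => 1 / (k : ℝ) ^ 2), two_mul]
    _ ≤ 2 / (n : ℝ) ^ 2 * (2 * (π ^ 2 / 6)) := by
        gcongr
        exact sum_Ioo_one_div_sq_le n
    _ = 2 / 3 * π ^ 2 / (n : ℝ) ^ 2 := by ring

theorem le_pow_div_sq_of_le_mul_convolution (a : ℕ → ℝ) {C : ℝ} (hC : 0 ≤ C)
    (ha : ∀ n, 1 ≤ n → 0 ≤ a n)
    (hrec : ∀ n, 2 ≤ n → a n ≤ C * ∑ k ∈ Ioo 0 n, a k * a (n - k)) :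
    ∀ n, 1 ≤ n → a n ≤ (2 / 3 * π ^ 2 * C) ^ (n - 1) * a 1 ^ n / (n : ℝ) ^ 2 := by
  set K := 2 / 3 * π ^ 2 * C with hK
  have ha1 := ha 1 le_rfl
  intro n
  induction n using Nat.strong_induction_on with
  | _ n ih =>
    intro hn
    obtain rfl | hn2 := eq_or_lt_of_le hn
    · simp
    calc a n ≤ C * ∑ k ∈ Ioo 0 n, a k * a (n - k) := hrec n hn2
      _ ≤ C * ∑ k ∈ Ioo 0 n,
          K ^ (k - 1) * a 1 ^ k / (k : ℝ) ^ 2 *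
            (K ^ (n - k - 1) * a 1 ^ (n - k) / ((n - k : ℕ) : ℝ) ^ 2) := by
        refine mul_le_mul_of_nonneg_left (sum_le_sum fun k hk => ?_) hC
        obtain ⟨hk0, hkn⟩ := mem_Ioo.mp hk
        exact mul_le_mul (ih k hkn hk0) (ih (n - k) (by omega) (by omega)) (ha _ (by omega))
          (by positivity)
      _ = C * (K ^ (n - 2) * a 1 ^ n) *
            ∑ k ∈ Ioo 0 n, 1 / ((k : ℝ) ^ 2 * ((n - k : ℕ) : ℝ) ^ 2) := by
        rw [mul_sum, mul_sum]
        refine sum_congr rfl fun k hk => ?_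
        obtain ⟨hk0, hkn⟩ := mem_Ioo.mp hk
        rw [div_mul_div_comm, mul_mul_mul_comm, ← pow_add, ← pow_add,
          show k - 1 + (n - k - 1) = n - 2 by omega, Nat.add_sub_of_le hkn.le]
        ring
      _ ≤ C * (K ^ (n - 2) * a 1 ^ n) * (2 / 3 * π ^ 2 / (n : ℝ) ^ 2) := by
        gcongr
        exact sum_Ioo_one_div_sq_mul_sq_le n
      _ = K ^ (n - 1) * a 1 ^ n / (n : ℝ) ^ 2 := by
        rw [show n - 1 = n - 2 + 1 by omega, pow_succ, hK]
        ring

/-- Catalan-type recursion bound: if a positive sequence satisfies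
`a n ≤ C * ∑_{n₁+n₂=n, n₁,n₂ ≥ 1} a n₁ * a n₂` for all `n ≥ 2`, then
`a n ≤ ((2/3) π² C)^(n-1) * (a 1)^n` for all `n ≥ 1`. -/
theorem stmt_0 (a : ℕ → ℝ) (C : ℝ) (hC : 0 < C) (hpos : ∀ n, 1 ≤ n → 0 < a n)
    (hrec : ∀ n, 2 ≤ n → a n ≤ C * ∑ k ∈ Finset.Ioo 0 n, a k * a (n - k)) :
    ∀ n, 1 ≤ n → a n ≤ ((2 / 3) * Real.pi ^ 2 * C) ^ (n - 1) * (a 1) ^ n := by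
  intro n hn
  have hbound := le_pow_div_sq_of_le_mul_convolution a hC.le (fun n hn => (hpos n hn).le) hrec n hn
  have ha1 := (hpos 1 le_rfl).le
  exact hbound.trans <| div_le_self (by positivity) (one_le_pow₀ (by exact_mod_cast hn))
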